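/- Let B = S Wᵀ where S ∈ {±1}^{n×r} is Schur independent and W ∈ R^{m×r} has full column rank. If B = S̃ W̃ᵀ is another decomposition with S̃ ∈ {±1}^{n×r} and W̃ ∈ R^{m×r}, then there exists a signed permutation matrix Π ∈ R^{r×r} with S̃ = S Π and W̃ = W Π. -/

import Mathlib

/-!
For ±1-vectors `s_j`, expanding the square of `v = ∑ c_j s_j` gives
`v ⊙ v = (∑ c_j²) e + ∑_{j<k} 2 c_j c_k (s_j ⊙ s_k)`. So under Schur independence `v` has
constant squared entries only if the `c_j` have pairwise disjoint supports: the `s_j` are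
linearly independent, and the only ±1-vectors in their span are the `±s_j`.

As `W` has full column rank, the column space of `B` is that of `S`, which has dimension `r` and
therefore equals that of `S̃`. Each column of `S̃` is thus some `±s_{σ j}`, and `σ` is onto since
every `s_k` lies in the span of the columns of `S̃`. This gives `S̃ = S Π`; cancelling the injective
`S` in `S Wᵀ = S Π W̃ᵀ` gives `Wᵀ = Π W̃ᵀ`, i.e. `W̃ = W Π` because `Π` is orthogonal.
-/

open Matrix

/-- Schur independence of a family of sign vectors. -/
def SchurIndep {n r : ℕ} (s : Fin r → (Fin n → ℝ)) : Prop :=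
  LinearIndependent ℝ (fun p : Option {p : Fin r × Fin r // p.1 < p.2} =>
    p.elim (fun _ => (1 : ℝ)) (fun q => s q.1.1 * s q.1.2))

/-- A signed permutation matrix. -/
def IsSignedPermMatrix {r : ℕ} (Q : Matrix (Fin r) (Fin r) ℝ) : Prop :=
  ∃ (π : Equiv.Perm (Fin r)) (ξ : Fin r → ℝ), (∀ i, ξ i = 1 ∨ ξ i = -1) ∧
    ∀ i j, Q i j = if j = π i then ξ i else 0

open Finset in
theorem sq_sum_eq_sum_sq_add_two_mul_sum_lt {ι R : Type*} [Fintype ι] [LinearOrder ι]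
    [CommSemiring R] (a : ι → R) :
    (∑ i, a i) ^ 2 = ∑ i, a i ^ 2 + 2 * ∑ p : {p : ι × ι // p.1 < p.2}, a p.1.1 * a p.1.2 := by
  have hpairs : ∑ p : {p : ι × ι // p.1 < p.2}, a p.1.1 * a p.1.2 =
      ∑ i, ∑ j, if i < j then a i * a j else 0 := by
    rw [← Fintype.sum_prod_type', ← sum_filter, ← sum_subtype_eq_sum_filter, subtype_univ]
  have hswap : (∑ i, ∑ j, if j < i then a i * a j else 0) =
      ∑ i, ∑ j, if i < j then a i * a j else 0 := by
    rw [sum_comm]; simp only [mul_comm]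
  have htrich : ∀ i j, a i * a j = (if i < j then a i * a j else 0) +
      (if j < i then a i * a j else 0) + (if i = j then a i * a j else 0) := by
    intro i j
    rcases lt_trichotomy i j with h | rfl | h
    · simp [h, h.not_gt, h.ne]
    · simp
    · simp [h, h.not_gt, h.ne']
  calc (∑ i, a i) ^ 2 = ∑ i, ∑ j, a i * a j := by rw [sq, sum_mul_sum]
    _ = _ := sum_congr rfl fun i _ => sum_congr rfl fun j _ => htrich i j
    _ = _ := by
      simp only [sum_add_distrib, hswap, sum_ite_eq, mem_univ, if_true, hpairs, sq]
      ring

namespace SchurIndep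

variable {n r : ℕ} {s : Fin r → Fin n → ℝ}

theorem sum_sq_eq_and_mul_eq_zero (hSchur : SchurIndep s)
    (hs : ∀ j i, s j i = 1 ∨ s j i = -1) {c : Fin r → ℝ} {t : ℝ}
    (hc : ∀ i, (∑ j, c j * s j i) ^ 2 = t) :
    ∑ j, c j ^ 2 = t ∧ ∀ j k, j < k → c j * c k = 0 := by
  -- `f` and `g` are the coefficients of `v ⊙ v` and of `t • e` in the Schur family
  set f : Option {p : Fin r × Fin r // p.1 < p.2} → ℝ :=
    fun x => x.elim (∑ j, c j ^ 2) fun q => 2 * (c q.1.1 * c q.1.2)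
  set g : Option {p : Fin r × Fin r // p.1 < p.2} → ℝ := fun x => x.elim t 0
  have hfg := Fintype.linearIndependent_iffₛ.mp hSchur f g <| by
    ext i
    have hexp := sq_sum_eq_sum_sq_add_two_mul_sum_lt fun j => c j * s j i
    have hsq : ∀ j, (c j * s j i) ^ 2 = c j ^ 2 := fun j => by
      rcases hs j i with h | h <;> simp [h]
    simp only [hc, hsq, Finset.mul_sum] at hexp
    simp [Fintype.sum_option, f, g, Finset.sum_apply, hexp, mul_assoc, mul_left_comm]
  refine ⟨hfg none, fun j k hjk => ?_⟩
  have := hfg (some ⟨(j, k), hjk⟩)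
  simp only [f, g, Option.elim_some, Pi.zero_apply] at this
  linarith

theorem linearIndependent (hSchur : SchurIndep s) (hs : ∀ j i, s j i = 1 ∨ s j i = -1) :
    LinearIndependent ℝ s := by
  refine Fintype.linearIndependent_iff.mpr fun c hc j => ?_
  have hc' : ∀ i, (∑ j, c j * s j i) ^ 2 = 0 := fun i => by
    simpa [Finset.sum_apply] using congrFun hc i
  have hnorm := (hSchur.sum_sq_eq_and_mul_eq_zero hs hc').1
  rw [Finset.sum_eq_zero_iff_of_nonneg fun j _ => sq_nonneg (c j)] at hnorm
  exact pow_eq_zero_iff two_ne_zero |>.mp (hnorm j (Finset.mem_univ j))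

theorem exists_eq_smul_of_mem_span (hSchur : SchurIndep s)
    (hs : ∀ j i, s j i = 1 ∨ s j i = -1) {t : Fin n → ℝ} (ht : ∀ i, t i = 1 ∨ t i = -1)
    (hmem : t ∈ Submodule.span ℝ (Set.range s)) :
    ∃ k, ∃ ξ : ℝ, (ξ = 1 ∨ ξ = -1) ∧ t = ξ • s k := by
  obtain ⟨c, rfl⟩ := (Submodule.mem_span_range_iff_exists_fun ℝ).mp hmem
  have hc : ∀ i, (∑ j, c j * s j i) ^ 2 = 1 := fun i => by
    have hi : (∑ j, c j • s j) i = ∑ j, c j * s j i := by simp [Finset.sum_apply]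
    rcases ht i with h | h <;> rw [← hi, h] <;> norm_num
  obtain ⟨hnorm, hortho⟩ := hSchur.sum_sq_eq_and_mul_eq_zero hs hc
  obtain ⟨k, -, hk2⟩ := Finset.exists_ne_zero_of_sum_ne_zero (hnorm ▸ one_ne_zero)
  have hk : c k ≠ 0 := by simpa using hk2
  have hzero : ∀ j ≠ k, c j = 0 := fun j hj => by
    rcases hj.lt_or_gt with h | h
    · exact (mul_eq_zero.mp (hortho j k h)).resolve_right hk
    · exact (mul_eq_zero.mp (hortho k j h)).resolve_left hk
  rw [Fintype.sum_eq_single k fun j hj => by rw [hzero j hj, zero_pow two_ne_zero]] at hnorm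
  refine ⟨k, c k, sq_eq_one_iff.mp hnorm, ?_⟩
  exact Fintype.sum_eq_single (f := fun j => c j • s j) k fun j hj => by rw [hzero j hj, zero_smul]

end SchurIndep

open Submodule in
theorem LinearIndependent.surjective_of_span_le {ι κ R V : Type*} [Ring R] [Nontrivial R]
    [AddCommGroup V] [Module R V] {v : ι → V} (hv : LinearIndependent R v) {w : κ → V}
    {σ : κ → ι} (hw : ∀ j, ∃ a : R, w j = a • v (σ j))
    (hspan : span R (Set.range v) ≤ span R (Set.range w)) : σ.Surjective := by
  intro k
  by_contra hk
  refine hv.notMem_span_image (s := Set.range σ) (x := k) hk ?_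
  refine span_le.mpr ?_ (hspan (subset_span ⟨k, rfl⟩))
  rintro _ ⟨j, rfl⟩
  obtain ⟨a, ha⟩ := hw j
  exact ha ▸ smul_mem _ a (subset_span ⟨σ j, ⟨j, rfl⟩, rfl⟩)

namespace Matrix

section ColumnSpace

variable {l m n : Type*} [Fintype m]

theorem mul_right_injective_of_linearIndependent_col {R : Type*} [CommRing R] {S : Matrix l m R}
    (hS : LinearIndependent R S.col) : Function.Injective fun A : Matrix m n R => S * A :=
  fun _ _ h => ext_col fun j => mulVec_injective_iff.mpr hS congr(($h).col j)

variable {K : Type*} [Field K] [Fintype n]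

theorem range_mulVecLin_mul_transpose (S : Matrix l n K) {W : Matrix m n K}
    (hW : W.rank = Fintype.card n) :
    LinearMap.range (S * Wᵀ).mulVecLin = LinearMap.range S.mulVecLin := by
  rw [mulVecLin_mul]
  refine LinearMap.range_comp_of_range_eq_top _ (Submodule.eq_top_of_finrank_eq ?_)
  rw [← rank, rank_transpose, hW, Module.finrank_fintype_fun_eq_card]

theorem span_range_col_eq_of_mul_transpose_eq [Fintype l] {S S' : Matrix l n K}
    {W W' : Matrix m n K} (hS : S.rank = Fintype.card n) (hW : W.rank = Fintype.card n)
    (h : S * Wᵀ = S' * W'ᵀ) :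
    Submodule.span K (Set.range S'.col) = Submodule.span K (Set.range S.col) := by
  rw [← range_mulVecLin, ← range_mulVecLin]
  symm
  refine Submodule.eq_of_le_of_finrank_le ?_ ((S'.rank_le_card_width).trans hS.ge)
  rw [← range_mulVecLin_mul_transpose S hW, h, mulVecLin_mul]
  exact LinearMap.range_comp_le_range _ _

end ColumnSpace

section SignedPermutation

open Equiv

theorem isSignedPermMatrix_permMatrix_mul_diagonal {r : ℕ} (π : Perm (Fin r)) {ξ : Fin r → ℝ}
    (hξ : ∀ i, ξ i = 1 ∨ ξ i = -1) : IsSignedPermMatrix (π.permMatrix ℝ * diagonal ξ) := by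
  refine ⟨π, ξ ∘ π, fun i => hξ (π i), fun i j => ?_⟩
  rw [mul_diagonal]
  by_cases h : j = π i <;> simp [h, PEquiv.toMatrix_apply, eq_comm]

variable {n R : Type*} [Fintype n] [DecidableEq n] [CommRing R]

theorem transpose_mul_self_permMatrix_mul_diagonal (π : Perm n) {ξ : n → R}
    (hξ : ∀ i, ξ i = 1 ∨ ξ i = -1) :
    (π.permMatrix R * diagonal ξ)ᵀ * (π.permMatrix R * diagonal ξ) = 1 := by
  have hsq : diagonal ξ * diagonal ξ = 1 := by
    rw [diagonal_mul_diagonal, ← diagonal_one]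
    congr 1
    ext i
    rcases hξ i with h | h <;> simp [h]
  rw [transpose_mul, diagonal_transpose, transpose_permMatrix, mul_assoc,
    ← mul_assoc (π⁻¹.permMatrix R), ← permMatrix_mul, mul_inv_cancel, permMatrix_one, one_mul, hsq]

theorem eq_mul_permMatrix_mul_diagonal {l : Type*} {S S' : Matrix l n R} (σ : Perm n) (ξ : n → R)
    (h : ∀ j, S'.col j = ξ j • S.col (σ j)) : S' = S * (σ⁻¹.permMatrix R * diagonal ξ) := by
  rw [← Matrix.mul_assoc, PEquiv.mul_toMatrix_toPEquiv]
  ext a j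
  rw [mul_diagonal]
  simpa [mul_comm, Perm.inv_def] using congrFun (h j) a

end SignedPermutation

end Matrix

/-- Uniqueness, up to signed permutation, of a minimal sign component
decomposition with Schur independent sign component and full-column-rank weights. -/
theorem sign_component_decomposition_uniqueness {n m r : ℕ}
    (S S' : Matrix (Fin n) (Fin r) ℝ) (W W' : Matrix (Fin m) (Fin r) ℝ)
    (hS : ∀ i j, S i j = 1 ∨ S i j = -1)
    (hSchur : SchurIndep (fun j i => S i j))
    (hW : W.rank = r)
    (hS' : ∀ i j, S' i j = 1 ∨ S' i j = -1)
    (hB : S * Wᵀ = S' * W'ᵀ) :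
    ∃ P : Matrix (Fin r) (Fin r) ℝ,
      IsSignedPermMatrix P ∧ S' = S * P ∧ W' = W * P := by
  have hSind : LinearIndependent ℝ S.col := hSchur.linearIndependent fun j i => hS i j
  have hspan : Submodule.span ℝ (Set.range S'.col) = Submodule.span ℝ (Set.range S.col) :=
    span_range_col_eq_of_mul_transpose_eq
      (by rw [rank_eq_finrank_span_cols, finrank_span_eq_card hSind])
      (by rwa [Fintype.card_fin]) hB
  choose σ ξ hξ hcol using fun j => hSchur.exists_eq_smul_of_mem_span (fun j i => hS i j)
    (fun i => hS' i j) (hspan ▸ Submodule.subset_span ⟨j, rfl⟩)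
  have hσ : σ.Surjective := hSind.surjective_of_span_le (fun j => ⟨ξ j, hcol j⟩) hspan.ge
  set e : Equiv.Perm (Fin r) := Equiv.ofBijective σ (Finite.surjective_iff_bijective.mp hσ)
  set P := e⁻¹.permMatrix ℝ * diagonal ξ
  have hS'P : S' = S * P := eq_mul_permMatrix_mul_diagonal e ξ hcol
  have hWP : Wᵀ = P * W'ᵀ :=
    mul_right_injective_of_linearIndependent_col hSind <|
      show S * Wᵀ = S * (P * W'ᵀ) by rw [hB, hS'P, Matrix.mul_assoc]
  refine ⟨P, isSignedPermMatrix_permMatrix_mul_diagonal _ hξ, hS'P, ?_⟩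
  calc W' = W' * (Pᵀ * P) := by
        rw [transpose_mul_self_permMatrix_mul_diagonal _ hξ, Matrix.mul_one]
    _ = (P * W'ᵀ)ᵀ * P := by rw [transpose_mul P, transpose_transpose, Matrix.mul_assoc]
    _ = W * P := by rw [← hWP, transpose_transpose]
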